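/- arXiv:1411.2715 — 4 statements merged into one kernel-verified Lean document; each statement's English description precedes it below -/
import Mathlib

section
/- Let μ > 1 and 1/μ < λ ≤ 1. Define φ: [0,∞) → ℝ by φ(0) = 0, φ(z) = z·(log(1/z))^{μ(1−λ)} for z ∈ (0, e^{−2μ}], and φ(z) = (z − e^{−2μ})·ψ'(e^{−2μ}) + ψ(e^{−2μ}) for z > e^{−2μ}, where ψ(z) = z·(log(1/z))^{μ(1−λ)}. Then φ(1) ≥ 1. -/
/-! With `c = exp (-2μ)` and `A = (2μ) ^ (μ(1-λ))` one has `ψ c = c A` and `ψ' c = A (1+λ)/2 ≤ A`,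
so `φ 1 = (1-c) ψ' c + ψ c ≥ ψ' c`. It remains to show `A (1+λ) ≥ 2`: by `exp t ≥ 1 + t`,
`A ≥ 1 + μ(1-λ) log (2μ)`, and `μ(1+λ) log (2μ) ≥ 1` because `μ(1+λ) > μ + 1 > 2` and `log 2 > 1/2`. -/

open Real

lemma one_add_mul_log_le_rpow {x : ℝ} (hx : 0 < x) (y : ℝ) : 1 + y * log x ≤ x ^ y := by
  rw [rpow_def_of_pos hx, mul_comm]
  linarith [add_one_le_exp (log x * y)]

lemma log_one_div_exp_neg (L : ℝ) : log (1 / exp (-L)) = L := by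
  rw [one_div, log_inv, log_exp, neg_neg]

lemma hasDerivAt_mul_log_one_div_rpow {z a : ℝ} (hlog : log (1 / z) ≠ 0) :
    HasDerivAt (fun z => z * log (1 / z) ^ a) (log (1 / z) ^ a - a * log (1 / z) ^ (a - 1)) z := by
  have hz : z ≠ 0 := by rintro rfl; simp at hlog
  have hinner : HasDerivAt (fun z => log (1 / z)) (-z⁻¹) z := by
    simp only [one_div, log_inv]
    exact (hasDerivAt_log hz).neg
  refine ((hasDerivAt_id' z).mul (hinner.rpow_const (p := a) (Or.inl hlog))).congr_deriv ?_
  field_simp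
  ring

lemma deriv_mul_log_one_div_rpow_exp_neg {L : ℝ} (hL : L ≠ 0) (a : ℝ) :
    deriv (fun z => z * log (1 / z) ^ a) (exp (-L)) = L ^ a * (1 - a / L) := by
  have hlog := log_one_div_exp_neg L
  rw [(hasDerivAt_mul_log_one_div_rpow (by rwa [hlog])).deriv, hlog, rpow_sub_one hL]
  ring

lemma two_le_rpow_mul_one_add {μ lam : ℝ} (hμ : 1 < μ) (hlam1 : 1 / μ < lam) (hlam2 : lam ≤ 1) :
    2 ≤ (2 * μ) ^ (μ * (1 - lam)) * (1 + lam) := by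
  have hμlam : 1 < μ * lam := by rwa [div_lt_iff₀ (by linarith), mul_comm] at hlam1
  have hlog : 1 / 2 < log (2 * μ) := by
    linarith [log_two_gt_d9, log_le_log two_pos (by linarith : (2 : ℝ) ≤ 2 * μ)]
  have hprod : 1 ≤ μ * (1 + lam) * log (2 * μ) := by nlinarith
  have hexp := one_add_mul_log_le_rpow (by linarith : (0 : ℝ) < 2 * μ) (μ * (1 - lam))
  nlinarith [mul_le_mul_of_nonneg_left hprod (by linarith : (0 : ℝ) ≤ 1 - lam)]

theorem phi_one_ge_one_general (μ lam : ℝ) (hμ : 1 < μ)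
    (hlam1 : 1 / μ < lam) (hlam2 : lam ≤ 1)
    (ψ : ℝ → ℝ) (hψ : ψ = fun z : ℝ => z * (Real.log (1 / z)) ^ (μ * (1 - lam)))
    (φ : ℝ → ℝ)
    (hφlin : ∀ z : ℝ, Real.exp (-2 * μ) < z →
      φ z = (z - Real.exp (-2 * μ)) * deriv ψ (Real.exp (-2 * μ)) + ψ (Real.exp (-2 * μ))) :
    1 ≤ φ 1 := by
  have hc : exp (-2 * μ) = exp (-(2 * μ)) := by rw [neg_mul]
  set A := (2 * μ) ^ (μ * (1 - lam))
  have hc1 : exp (-2 * μ) < 1 := exp_lt_one_iff.mpr (by linarith)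
  have hψc : ψ (exp (-2 * μ)) = exp (-2 * μ) * A := by
    rw [hψ, hc]
    beta_reduce
    rw [log_one_div_exp_neg]
  have hderiv : deriv ψ (exp (-2 * μ)) = A * ((1 + lam) / 2) := by
    rw [hψ, hc, deriv_mul_log_one_div_rpow_exp_neg (by linarith)]
    field_simp
    ring
  have hkey := two_le_rpow_mul_one_add hμ hlam1 hlam2
  have hrest : 0 ≤ exp (-2 * μ) * A * (1 - lam) :=
    mul_nonneg (by positivity) (by linarith)
  rw [hφlin 1 hc1, hderiv, hψc]
  linarith

theorem phi_one_ge_one (μ lam : ℝ) (hμ : 1 < μ)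
    (hlam1 : 1 / μ < lam) (hlam2 : lam ≤ 1)
    (ψ : ℝ → ℝ) (hψ : ψ = fun z : ℝ => z * (Real.log (1 / z)) ^ (μ * (1 - lam)))
    (φ : ℝ → ℝ)
    (hφ0 : φ 0 = 0)
    (hφmid : ∀ z ∈ Set.Ioc (0 : ℝ) (Real.exp (-2 * μ)), φ z = ψ z)
    (hφlin : ∀ z : ℝ, Real.exp (-2 * μ) < z →
      φ z = (z - Real.exp (-2 * μ)) * deriv ψ (Real.exp (-2 * μ)) + ψ (Real.exp (-2 * μ))) :
    1 ≤ φ 1 :=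
  phi_one_ge_one_general μ lam hμ hlam1 hlam2 ψ hψ φ hφlin
end

section
/- Let μ > 1, 1/μ < λ ≤ 1, γ > 0, and κ ≥ max{exp(e²), exp(e²·γ^{1/μ})}. Let φ(z) = z·(log(1/z))^{μ(1−λ)} for z ∈ (0, e^{−2μ}]. Then there exists a constant D > 0, depending only on μ, λ, κ, such that for all nonzero integers k, φ(γ/(|k|·(log(κ|k|))^μ)) ≤ D·γ·max{1, log(γ^{−1})}^{μ(1−λ)} / (|k|·(log(κ|k|))^{μλ}). -/
open Real

theorem phi_of_weight_bound (μ lam κ : ℝ) (hμ : 1 < μ)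
    (hlam1 : 1 / μ < lam) (hlam2 : lam ≤ 1)
    (hκ : Real.exp (Real.exp 2) ≤ κ) :
    ∃ D : ℝ, 0 < D ∧ ∀ γ : ℝ, 0 < γ → Real.exp (Real.exp 2 * γ ^ (1 / μ)) ≤ κ →
      ∀ k : ℤ, k ≠ 0 →
        (fun z : ℝ => z * (Real.log (1 / z)) ^ (μ * (1 - lam)))
            (γ / (|(k : ℝ)| * (Real.log (κ * |(k : ℝ)|)) ^ μ)) ≤
          D * γ * (max 1 (Real.log γ⁻¹)) ^ (μ * (1 - lam)) /
            (|(k : ℝ)| * (Real.log (κ * |(k : ℝ)|)) ^ (μ * lam)) := by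
  have hμ0 : (0:ℝ) < μ := by linarith
  have hα0 : 0 ≤ μ * (1 - lam) := mul_nonneg hμ0.le (by linarith)
  refine ⟨(2 + μ) ^ (μ * (1 - lam)), Real.rpow_pos_of_pos (by linarith) _, ?_⟩
  intro γ hγ hκγ k hk
  simp only
  have hK1 : (1:ℝ) ≤ |(k:ℝ)| := by exact_mod_cast Int.one_le_abs hk
  have hK0 : (0:ℝ) < |(k:ℝ)| := by linarith
  set K := |(k:ℝ)| with hKdef
  set L := Real.log (κ * K) with hLdef
  have hκ0 : (0:ℝ) < κ := lt_of_lt_of_le (Real.exp_pos _) hκ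
  have he2 : (1:ℝ) ≤ Real.exp 2 := by nlinarith [Real.add_one_le_exp (2:ℝ)]
  have hlogκ : Real.exp 2 ≤ Real.log κ := (Real.le_log_iff_exp_le hκ0).2 hκ
  have hlogK : 0 ≤ Real.log K := Real.log_nonneg hK1
  have hLsplit : L = Real.log κ + Real.log K :=
    Real.log_mul (by positivity) (by positivity)
  have hL1 : 1 ≤ L := by rw [hLsplit]; linarith
  have hL0 : 0 < L := by linarith
  set M := max 1 (Real.log γ⁻¹) with hMdef
  have hM1 : 1 ≤ M := le_max_left _ _
  have hLμ : 0 < L ^ μ := Real.rpow_pos_of_pos hL0 μ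
  -- γ ≤ L ^ μ
  have hγpow : γ ^ (1/μ) ≤ L := by
    have h1 : Real.exp 2 * γ ^ (1/μ) ≤ Real.log κ := (Real.le_log_iff_exp_le hκ0).2 hκγ
    have h2 : γ ^ (1/μ) ≤ Real.exp 2 * γ ^ (1/μ) :=
      le_mul_of_one_le_left (Real.rpow_nonneg hγ.le _) he2
    rw [hLsplit]; linarith
  have hγL : γ ≤ L ^ μ := by
    calc γ = (γ ^ (1/μ)) ^ μ := by
            rw [← Real.rpow_mul hγ.le, one_div_mul_cancel hμ0.ne', Real.rpow_one]
      _ ≤ L ^ μ := Real.rpow_le_rpow (Real.rpow_nonneg hγ.le _) hγpow hμ0.le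
  set r := γ / (K * L ^ μ) with hrdef
  have hr0 : 0 < r := by positivity
  have hr1 : r ≤ 1 := by
    rw [hrdef, div_le_one (by positivity)]
    calc γ ≤ L ^ μ := hγL
      _ ≤ K * L ^ μ := le_mul_of_one_le_left hLμ.le hK1
  have hlog : Real.log (1/r) = Real.log K + μ * Real.log L + Real.log γ⁻¹ := by
    rw [hrdef, one_div_div, Real.log_div (by positivity) hγ.ne',
      Real.log_mul hK0.ne' hLμ.ne', Real.log_rpow hL0, Real.log_inv]
    ring
  have hA : Real.log K ≤ M * L := by
    have h1 : Real.log K ≤ L := by rw [hLsplit]; nlinarith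
    calc Real.log K ≤ L := h1
      _ ≤ M * L := le_mul_of_one_le_left hL0.le hM1
  have hB : μ * Real.log L ≤ μ * (M * L) := by
    have h1 : Real.log L ≤ L := Real.log_le_self hL0.le
    have h2 : L ≤ M * L := le_mul_of_one_le_left hL0.le hM1
    nlinarith
  have hC : Real.log γ⁻¹ ≤ M * L := by
    have h1 : Real.log γ⁻¹ ≤ M := le_max_right _ _
    have h2 : M ≤ M * L := le_mul_of_one_le_right (by linarith) hL1
    linarith
  have hsum : Real.log (1/r) ≤ (2 + μ) * (M * L) := by
    rw [hlog]; nlinarith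
  have hlognn : 0 ≤ Real.log (1/r) := by
    apply Real.log_nonneg
    rw [le_div_iff₀ hr0, one_mul]
    exact hr1
  have hpow : (Real.log (1/r)) ^ (μ * (1 - lam)) ≤
      ((2 + μ) * (M * L)) ^ (μ * (1 - lam)) :=
    Real.rpow_le_rpow hlognn hsum hα0
  have hM0 : (0:ℝ) < M := by linarith
  have hsplit : ((2 + μ) * (M * L)) ^ (μ * (1 - lam)) =
      (2 + μ) ^ (μ * (1 - lam)) * (M ^ (μ * (1 - lam)) * L ^ (μ * (1 - lam))) := by
    rw [Real.mul_rpow (by linarith) (by positivity), Real.mul_rpow hM0.le hL0.le]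
  have hLrw : L ^ μ = L ^ (μ * lam) * L ^ (μ * (1 - lam)) := by
    rw [← Real.rpow_add hL0]; ring_nf
  have hLml : 0 < L ^ (μ * lam) := Real.rpow_pos_of_pos hL0 _
  have hLα : 0 < L ^ (μ * (1 - lam)) := Real.rpow_pos_of_pos hL0 _
  have key : r * ((2 + μ) * (M * L)) ^ (μ * (1 - lam)) =
      (2 + μ) ^ (μ * (1 - lam)) * γ * M ^ (μ * (1 - lam)) / (K * L ^ (μ * lam)) := by
    rw [hsplit, hrdef, hLrw]
    field_simp
  calc r * (Real.log (1/r)) ^ (μ * (1 - lam))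
      ≤ r * ((2 + μ) * (M * L)) ^ (μ * (1 - lam)) :=
        mul_le_mul_of_nonneg_left hpow hr0.le
    _ = (2 + μ) ^ (μ * (1 - lam)) * γ * M ^ (μ * (1 - lam)) / (K * L ^ (μ * lam)) := key
end

section
/- Let μ > 1, α > 1/2, λ ∈ (1/(2α), 1], and κ ≥ exp(e²). Set τ = max{(log κ)^μ, (μ/(2λα − 1))^μ}. Then for every real x ≥ 1, log(κx) ≤ τ^{1/μ}·x^{(2λα−1)/μ}. -/
open Real

theorem log_le_tau_rpow (μ α lam κ : ℝ) (hμ : 1 < μ) (hα : 1 / 2 < α)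
    (hlam1 : 1 / (2 * α) < lam) (hlam2 : lam ≤ 1)
    (hκ : Real.exp (Real.exp 2) ≤ κ) :
    ∀ x : ℝ, 1 ≤ x →
      Real.log (κ * x) ≤
        (max ((Real.log κ) ^ μ) ((μ / (2 * lam * α - 1)) ^ μ)) ^ (1 / μ) *
          x ^ ((2 * lam * α - 1) / μ) := by
  intro x hx
  set c : ℝ := 2 * lam * α - 1 with hc
  have hμ0 : (0:ℝ) < μ := by linarith
  have hα0 : (0:ℝ) < 2 * α := by linarith
  have hc0 : 0 < c := by
    have : 1 < lam * (2 * α) := (div_lt_iff₀ hα0).mp hlam1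
    have : 1 < 2 * lam * α := by nlinarith
    simpa [hc] using sub_pos.mpr this
  have hlogκ : Real.exp 2 ≤ Real.log κ := by
    have := Real.log_le_log (Real.exp_pos _) hκ
    simpa using this
  have hlogκ0 : 0 < Real.log κ := lt_of_lt_of_le (Real.exp_pos 2) hlogκ
  have hκ0 : 0 < κ := lt_of_lt_of_le (Real.exp_pos _) hκ
  have hx0 : 0 < x := lt_of_lt_of_le one_pos hx
  set τ : ℝ := max ((Real.log κ) ^ μ) ((μ / c) ^ μ) with hτ
  have hτ0 : 0 ≤ τ := le_trans (Real.rpow_nonneg hlogκ0.le μ) (le_max_left _ _)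
  set T : ℝ := τ ^ (1 / μ) with hT
  -- T ≥ log κ
  have hmem : ∀ a : ℝ, 0 ≤ a → a ^ μ ≤ τ → a ≤ T := by
    intro a ha hle
    have h1 : (a ^ μ) ^ (1 / μ) ≤ T :=
      Real.rpow_le_rpow (Real.rpow_nonneg ha μ) hle (by positivity)
    have h2 : (a ^ μ) ^ (1 / μ) = a := by
      rw [← Real.rpow_mul ha, mul_one_div_cancel hμ0.ne', Real.rpow_one]
    rwa [h2] at h1
  have hT1 : Real.log κ ≤ T := hmem _ hlogκ0.le (le_max_left _ _)
  have hT2 : μ / c ≤ T := hmem _ (by positivity) (le_max_right _ _)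
  -- log x bound
  have hxp : 0 < x ^ (c / μ) := Real.rpow_pos_of_pos hx0 _
  have hxp1 : 1 ≤ x ^ (c / μ) := Real.one_le_rpow hx (by positivity)
  have hlogx : Real.log x ≤ (μ / c) * (x ^ (c / μ) - 1) := by
    have h1 : Real.log (x ^ (c / μ)) ≤ x ^ (c / μ) - 1 :=
      Real.log_le_sub_one_of_pos hxp
    rw [Real.log_rpow hx0] at h1
    have h2 : Real.log x = (μ / c) * (c / μ * Real.log x) := by
      field_simp
    rw [h2]
    exact mul_le_mul_of_nonneg_left h1 (by positivity)
  have key : (μ / c) * (x ^ (c / μ) - 1) ≤ T * (x ^ (c / μ) - 1) :=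
    mul_le_mul_of_nonneg_right hT2 (by linarith)
  calc Real.log (κ * x) = Real.log κ + Real.log x := Real.log_mul hκ0.ne' hx0.ne'
    _ ≤ T + T * (x ^ (c / μ) - 1) := by linarith
    _ = T * x ^ (c / μ) := by ring
end

section
/- Define f(x) = ∑_{k=1}^∞ cos(2πkx)/(k·(log(κk))^μ) with κ ≥ exp(e²) and μ > 1. Then f is continuous on [0,1], but for every β > 0 and every L > 0 there exists x ∈ (0,1) with f(0) − f(x) > L·x^β; in particular f is not Hölder continuous of any positive exponent at 0. -/
/-!
The coefficients `1 / (j log(κ j)^μ)` are summable for `μ > 1` (Cauchy condensation turns them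
into `1 / (log κ + n log 2)^μ`), so the cosine series converges uniformly and `f` is continuous.
At `x = 1 / (4n)` every frequency `j ∈ [n, 2n]` has `cos (2π j x) ≤ 0`, so these `n + 1` terms
alone give `f 0 - f x ≥ 1 / (4 log (4κn)^μ)`, which decays more slowly than any power
`x^β = (4n)^(-β)`.
-/

open Real Filter Finset Asymptotics

noncomputable def cosSeries (a : ℕ → ℝ) (x : ℝ) : ℝ :=
  ∑' k : ℕ, cos (2 * π * ((k : ℝ) + 1) * x) * a k

noncomputable def logWeight (κ μ x : ℝ) : ℝ := x * log (κ * x) ^ μ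

section CosSeries

variable {a : ℕ → ℝ}

lemma norm_cos_mul_le (θ c : ℝ) : ‖cos θ * c‖ ≤ |c| := by
  rw [norm_mul, norm_eq_abs, norm_eq_abs]
  exact mul_le_of_le_one_left (abs_nonneg c) (abs_cos_le_one θ)

lemma continuous_cosSeries (ha : Summable a) : Continuous (cosSeries a) :=
  continuous_tsum (fun k => by fun_prop) ha.abs fun k x => norm_cos_mul_le _ _

lemma summable_cos_mul (ha : Summable a) (x : ℝ) :
    Summable fun k : ℕ => cos (2 * π * ((k : ℝ) + 1) * x) * a k :=
  .of_norm_bounded ha.abs fun _ => norm_cos_mul_le _ _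

lemma cosSeries_zero_sub (ha : Summable a) (x : ℝ) :
    cosSeries a 0 - cosSeries a x = ∑' k : ℕ, (1 - cos (2 * π * ((k : ℝ) + 1) * x)) * a k := by
  simp only [cosSeries, mul_zero, cos_zero, one_mul, ← ha.tsum_sub (summable_cos_mul ha x), sub_mul]

-- `k ∈ [n - 1, 2n - 1]` are the frequencies `k + 1 ∈ [n, 2n]`, where `cos (2π (k + 1) / (4n)) ≤ 0`.
lemma sum_Icc_le_cosSeries_sub (ha : Summable a) (ha0 : 0 ≤ a) {n : ℕ} (hn : 0 < n) :
    ∑ k ∈ Icc (n - 1) (2 * n - 1), a k ≤ cosSeries a 0 - cosSeries a (1 / (4 * n)) := by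
  have hn' : (0 : ℝ) < n := Nat.cast_pos.2 hn
  have hcos : ∀ k ∈ Icc (n - 1) (2 * n - 1), cos (2 * π * ((k : ℝ) + 1) * (1 / (4 * n))) ≤ 0 := by
    intro k hk
    have hk : (n : ℝ) ≤ k + 1 ∧ (k : ℝ) + 1 ≤ 2 * n := by
      rw [mem_Icc] at hk
      exact ⟨by exact_mod_cast (by omega : n ≤ k + 1), by exact_mod_cast (by omega : k + 1 ≤ 2 * n)⟩
    have hangle : 2 * π * ((k : ℝ) + 1) * (1 / (4 * n)) = π / 2 * ((k + 1) / n) := by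
      field_simp; ring
    rw [hangle]
    apply cos_nonpos_of_pi_div_two_le_of_le
    · exact le_mul_of_one_le_right (by positivity) ((one_le_div hn').2 hk.1)
    · have : ((k : ℝ) + 1) / n ≤ 2 := (div_le_iff₀ hn').2 (by linarith)
      nlinarith [pi_pos]
  have hterm : ∀ k : ℕ, 0 ≤ (1 - cos (2 * π * ((k : ℝ) + 1) * (1 / (4 * n)))) * a k :=
    fun k => mul_nonneg (sub_nonneg.2 (cos_le_one _)) (ha0 k)
  rw [cosSeries_zero_sub ha]
  calc ∑ k ∈ Icc (n - 1) (2 * n - 1), a k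
      ≤ ∑ k ∈ Icc (n - 1) (2 * n - 1), (1 - cos (2 * π * ((k : ℝ) + 1) * (1 / (4 * n)))) * a k :=
        sum_le_sum fun k hk => le_mul_of_one_le_left (ha0 k) (by linarith [hcos k hk])
    _ ≤ _ := Summable.sum_le_tsum _ (fun k _ => hterm k)
        ((ha.sub (summable_cos_mul ha _)).congr fun k => by ring)

end CosSeries

section LogWeight

variable {κ μ : ℝ}

lemma logWeight_pos (hκ : 1 < κ) {x : ℝ} (hx : 1 ≤ x) : 0 < logWeight κ μ x :=
  mul_pos (by linarith) (rpow_pos_of_pos (log_pos (by nlinarith)) μ)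

lemma monotoneOn_logWeight (hκ : 1 ≤ κ) (hμ : 0 ≤ μ) : MonotoneOn (logWeight κ μ) (Set.Ici 1) := by
  intro x hx y hy hxy
  have hx : (1 : ℝ) ≤ x := hx
  have hlog : 0 ≤ log (κ * x) := log_nonneg (by nlinarith)
  exact mul_le_mul hxy (rpow_le_rpow hlog (log_le_log (by positivity) (by nlinarith)) hμ)
    (rpow_nonneg hlog μ) (by linarith)

lemma summable_inv_log_mul_two_pow_rpow (hκ : 1 < κ) (hμ : 1 < μ) :
    Summable fun n : ℕ => (log (κ * 2 ^ n) ^ μ)⁻¹ := by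
  set c := min (log κ) (log 2)
  have hc : 0 < c := lt_min (log_pos hκ) (log_pos one_lt_two)
  have hlin : ∀ n : ℕ, ((n : ℝ) + 1) * c ≤ log (κ * 2 ^ n) := fun n => by
    rw [log_mul (by positivity) (by positivity), log_pow]
    nlinarith [min_le_left (log κ) (log 2), min_le_right (log κ) (log 2),
      (n.cast_nonneg : (0 : ℝ) ≤ n)]
  have hmaj : Summable fun n : ℕ => (((n : ℝ) + 1) ^ μ)⁻¹ * (c ^ μ)⁻¹ :=
    ((summable_nat_add_iff 1).2 (Real.summable_nat_rpow_inv.2 hμ)).mul_right _ |>.congr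
      fun n => by push_cast; rfl
  refine .of_nonneg_of_le (fun n => ?_) (fun n => ?_) hmaj
  · exact inv_nonneg.2 (rpow_nonneg ((by positivity : (0 : ℝ) ≤ (n + 1) * c).trans (hlin n)) μ)
  · rw [← mul_inv, ← mul_rpow (by positivity) hc.le]
    exact inv_anti₀ (by positivity) (rpow_le_rpow (by positivity) (hlin n) (by linarith))

lemma summable_inv_logWeight (hκ : 1 < κ) (hμ : 1 < μ) :
    Summable fun k : ℕ => (logWeight κ μ (k + 1))⁻¹ := by
  have hnonneg : ∀ n : ℕ, 0 ≤ (logWeight κ μ n)⁻¹ := fun n => by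
    rcases n.eq_zero_or_pos with rfl | hn
    · simp [logWeight]
    · exact inv_nonneg.2 (logWeight_pos hκ (Nat.one_le_cast.2 hn)).le
  have hanti : ∀ ⦃m n : ℕ⦄, 0 < m → m ≤ n → (logWeight κ μ n)⁻¹ ≤ (logWeight κ μ m)⁻¹ :=
    fun m n hm hmn => inv_anti₀ (logWeight_pos hκ (Nat.one_le_cast.2 hm))
      (monotoneOn_logWeight hκ.le (by linarith) (Nat.one_le_cast.2 hm : (1 : ℝ) ≤ m)
        (Nat.one_le_cast.2 (hm.trans_le hmn) : (1 : ℝ) ≤ n) (Nat.cast_le.2 hmn))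
  have hcond : Summable fun n : ℕ => (2 : ℝ) ^ n * (logWeight κ μ ((2 ^ n : ℕ) : ℝ))⁻¹ :=
    (summable_inv_log_mul_two_pow_rpow hκ hμ).congr fun n => by
      rw [logWeight, Nat.cast_pow, Nat.cast_ofNat, mul_inv, ← mul_assoc,
        mul_inv_cancel₀ (by positivity), one_mul]
  exact_mod_cast (summable_nat_add_iff 1).2
    ((summable_condensed_iff_of_nonneg hnonneg hanti).1 hcond)

lemma inv_four_mul_log_rpow_le_sum (hκ : 1 < κ) (hμ : 0 ≤ μ) {n : ℕ} (hn : 0 < n) :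
    (4 * log (κ * (4 * n)) ^ μ)⁻¹ ≤ ∑ k ∈ Icc (n - 1) (2 * n - 1), (logWeight κ μ (k + 1))⁻¹ := by
  have hn' : (1 : ℝ) ≤ n := Nat.one_le_cast.2 hn
  have hterm : ∀ k ∈ Icc (n - 1) (2 * n - 1),
      (logWeight κ μ (4 * n))⁻¹ ≤ (logWeight κ μ (k + 1))⁻¹ := by
    intro k hk
    have hk : (k : ℝ) + 1 ≤ 2 * n := by
      rw [mem_Icc] at hk; exact_mod_cast (by omega : k + 1 ≤ 2 * n)
    have hk1 : (1 : ℝ) ≤ k + 1 := by linarith [(k.cast_nonneg : (0 : ℝ) ≤ k)]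
    exact inv_anti₀ (logWeight_pos hκ hk1)
      (monotoneOn_logWeight hκ.le hμ hk1 (show (1 : ℝ) ≤ 4 * n by linarith) (by linarith))
  have hcard : #(Icc (n - 1) (2 * n - 1)) = n + 1 := by rw [Nat.card_Icc]; omega
  have hsum := card_nsmul_le_sum _ _ _ hterm
  rw [hcard, nsmul_eq_mul] at hsum
  calc (4 * log (κ * (4 * n)) ^ μ)⁻¹ = n * (logWeight κ μ (4 * n))⁻¹ := by
        rw [logWeight]; field_simp
    _ ≤ (n + 1 : ℕ) * (logWeight κ μ (4 * n))⁻¹ := by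
        gcongr
        · exact inv_nonneg.2 (logWeight_pos hκ (by linarith)).le
        · linarith
    _ ≤ _ := hsum

end LogWeight

lemma eventually_mul_log_rpow_lt_rpow {κ β : ℝ} (μ C : ℝ) (hκ : 0 < κ) (hβ : 0 < β) :
    ∀ᶠ x in atTop, C * log (κ * x) ^ μ < x ^ β := by
  have ho : (fun x => log (κ * x) ^ μ) =o[atTop] fun x => x ^ β := by
    refine IsLittleO.of_const_mul_right (c := κ ^ β) ?_
    refine ((isLittleO_log_rpow_rpow_atTop μ hβ).comp_tendsto
      (tendsto_id.const_mul_atTop hκ)).congr' .rfl ?_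
    filter_upwards [eventually_ge_atTop 0] with x hx using mul_rpow hκ.le hx
  filter_upwards [ho.def (inv_pos.2 (by positivity : (0 : ℝ) < |C| + 1)), eventually_gt_atTop 0]
    with x hbound hx
  have hxβ : 0 < x ^ β := rpow_pos_of_pos hx β
  rw [norm_eq_abs, norm_eq_abs, abs_of_pos hxβ] at hbound
  calc C * log (κ * x) ^ μ ≤ |C| * |log (κ * x) ^ μ| := (le_abs_self _).trans (abs_mul _ _).le
    _ ≤ |C| * ((|C| + 1)⁻¹ * x ^ β) := by gcongr
    _ < x ^ β := by
        rw [← mul_assoc, ← div_eq_mul_inv]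
        exact mul_lt_of_lt_one_left hxβ ((div_lt_one (by positivity)).2 (by linarith))

theorem log_korobov_function_not_holder (μ κ : ℝ) (hμ : 1 < μ)
    (hκ : Real.exp (Real.exp 2) ≤ κ)
    (f : ℝ → ℝ)
    (hf : f = fun x : ℝ => ∑' k : ℕ,
      Real.cos (2 * Real.pi * ((k : ℝ) + 1) * x) /
        (((k : ℝ) + 1) * (Real.log (κ * ((k : ℝ) + 1))) ^ μ)) :
    ContinuousOn f (Set.Icc 0 1) ∧
      ∀ β : ℝ, 0 < β → ∀ L : ℝ, 0 < L →
        ∃ x ∈ Set.Ioo (0 : ℝ) 1, L * x ^ β < f 0 - f x := by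
  have hκ1 : 1 < κ := (one_lt_exp_iff.2 (exp_pos 2)).trans_le hκ
  set a : ℕ → ℝ := fun k => (logWeight κ μ (k + 1))⁻¹
  have ha : Summable a := summable_inv_logWeight hκ1 hμ
  have hfa : f = cosSeries a := hf ▸ funext fun x => tsum_congr fun k => div_eq_mul_inv _ _
  subst hfa
  refine ⟨(continuous_cosSeries ha).continuousOn, fun β hβ L _ => ?_⟩
  obtain ⟨n, hbig, hn⟩ := ((tendsto_natCast_atTop_atTop.const_mul_atTop four_pos).eventually
    (eventually_mul_log_rpow_lt_rpow μ (4 * L) (by linarith : 0 < κ) hβ)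
    |>.and (eventually_gt_atTop 0)).exists
  have hN : (1 : ℝ) < 4 * n := by linarith [(Nat.one_le_cast.2 hn : (1 : ℝ) ≤ n)]
  have hlog : 0 < log (κ * (4 * n)) ^ μ := rpow_pos_of_pos (log_pos (by nlinarith)) μ
  refine ⟨1 / (4 * n), ⟨by positivity, (div_lt_one (by linarith)).2 hN⟩, ?_⟩
  calc L * (1 / (4 * n)) ^ β = L / (4 * n) ^ β := by
        rw [div_rpow zero_le_one (by linarith), one_rpow, mul_one_div]
    _ < (4 * log (κ * (4 * n)) ^ μ)⁻¹ := by
        rw [div_lt_iff₀ (rpow_pos_of_pos (by linarith) β), ← div_eq_inv_mul,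
          lt_div_iff₀ (by positivity)]
        linarith
    _ ≤ ∑ k ∈ Icc (n - 1) (2 * n - 1), a k := inv_four_mul_log_rpow_le_sum hκ1 (by linarith) hn
    _ ≤ cosSeries a 0 - cosSeries a (1 / (4 * n)) :=
        sum_Icc_le_cosSeries_sub ha (fun k => inv_nonneg.2 (logWeight_pos hκ1 (by simp)).le) hn
end
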